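/- For every positive integer t, the weighted sum of 1/√i under the coefficients α^i_t satisfies the two-sided bound 1/√t ≤ ∑_{i=1}^{t} α^i_t / √i ≤ 2/√t. -/

import Mathlib

/-- Learning rate `α_t = (H+1)/(H+t)`. -/
noncomputable def lr (H t : ℕ) : ℝ := (H + 1) / (H + t)

/-- The coefficient `α^i_t`: for `i = 0` it is `∏_{j=1}^t (1 - α_j)`, and for
`i ≥ 1` it is `α_i · ∏_{j=i+1}^t (1 - α_j)`. -/
noncomputable def alphaC (H i t : ℕ) : ℝ :=
  if i = 0 then ∏ j ∈ Finset.Icc 1 t, (1 - lr H j)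
  else lr H i * ∏ j ∈ Finset.Icc (i + 1) t, (1 - lr H j)

/-!
For `t ≥ 1` the weights `α^i_t`, `1 ≤ i ≤ t`, are nonnegative and sum to one, so the sum is a
weighted average of `1/√i` and is at least the smallest value `1/√t`. For the upper bound, the
weighted average `S_t` obeys `S_{t+1} = (1 - α_{t+1}) S_t + α_{t+1} / √(t+1)`, and `2/√t` is a
supersolution of this recursion because `2√t√(t+1) ≤ 2t + 1`.
-/

open Finset

section

variable (H : ℕ)

lemma lr_nonneg (t : ℕ) : 0 ≤ lr H t := by
  unfold lr; positivity

lemma lr_le_one {t : ℕ} (ht : 1 ≤ t) : lr H t ≤ 1 := by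
  unfold lr
  rw [div_le_one (by positivity)]
  have : (1 : ℝ) ≤ t := by exact_mod_cast ht
  linarith

lemma lr_one : lr H 1 = 1 := by
  unfold lr; push_cast; exact div_self (by positivity)

lemma one_sub_lr_succ (t : ℕ) : 1 - lr H (t + 1) = t / (H + t + 1) := by
  unfold lr; push_cast; field_simp; ring

lemma alphaC_nonneg {i : ℕ} (hi : 1 ≤ i) (t : ℕ) : 0 ≤ alphaC H i t := by
  rw [alphaC, if_neg (by omega)]
  refine mul_nonneg (lr_nonneg H i) (prod_nonneg fun j hj => ?_)
  linarith [lr_le_one H (le_of_add_le_right (mem_Icc.mp hj).1)]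

lemma alphaC_self {t : ℕ} (ht : 1 ≤ t) : alphaC H t t = lr H t := by
  rw [alphaC, if_neg (by omega), Icc_eq_empty (by omega), prod_empty, mul_one]

lemma alphaC_succ {i t : ℕ} (hi : 1 ≤ i) (hit : i ≤ t) :
    alphaC H i (t + 1) = (1 - lr H (t + 1)) * alphaC H i t := by
  rw [alphaC, alphaC, if_neg (by omega), if_neg (by omega),
    prod_Icc_succ_top (by omega : i + 1 ≤ t + 1)]
  ring

lemma sum_alphaC_mul_succ (f : ℕ → ℝ) (t : ℕ) :
    ∑ i ∈ Icc 1 (t + 1), alphaC H i (t + 1) * f i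
      = (1 - lr H (t + 1)) * ∑ i ∈ Icc 1 t, alphaC H i t * f i + lr H (t + 1) * f (t + 1) := by
  rw [sum_Icc_succ_top (by omega), alphaC_self H (by omega), mul_sum]
  congr 1
  refine sum_congr rfl fun i hi => ?_
  rw [alphaC_succ H (mem_Icc.mp hi).1 (mem_Icc.mp hi).2]
  ring

lemma sum_alphaC_eq_one {t : ℕ} (ht : 1 ≤ t) : ∑ i ∈ Icc 1 t, alphaC H i t = 1 := by
  induction t, ht using Nat.le_induction with
  | base => rw [Icc_self, sum_singleton, alphaC_self H le_rfl, lr_one]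
  | succ t _ ih =>
    simpa only [mul_one, ih, sub_add_cancel] using sum_alphaC_mul_succ H (fun _ => 1) t

lemma le_sum_alphaC_mul {t : ℕ} (ht : 1 ≤ t) {f : ℕ → ℝ} {c : ℝ}
    (hf : ∀ i ∈ Icc 1 t, c ≤ f i) : c ≤ ∑ i ∈ Icc 1 t, alphaC H i t * f i :=
  calc c = ∑ i ∈ Icc 1 t, alphaC H i t * c := by rw [← sum_mul, sum_alphaC_eq_one H ht, one_mul]
    _ ≤ _ := sum_le_sum fun i hi =>
      mul_le_mul_of_nonneg_left (hf i hi) (alphaC_nonneg H (mem_Icc.mp hi).1 t)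

lemma sum_alphaC_mul_le {f g : ℕ → ℝ} (h₁ : f 1 ≤ g 1)
    (hstep : ∀ t ≥ 1, (1 - lr H (t + 1)) * g t + lr H (t + 1) * f (t + 1) ≤ g (t + 1))
    {t : ℕ} (ht : 1 ≤ t) : ∑ i ∈ Icc 1 t, alphaC H i t * f i ≤ g t := by
  induction t, ht using Nat.le_induction with
  | base => rwa [Icc_self, sum_singleton, alphaC_self H le_rfl, lr_one, one_mul]
  | succ t ht ih =>
    have hα : 0 ≤ 1 - lr H (t + 1) := sub_nonneg.mpr (lr_le_one H (by omega))
    rw [sum_alphaC_mul_succ]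
    exact (add_le_add_left (mul_le_mul_of_nonneg_left ih hα) _).trans (hstep t ht)

lemma lr_step_two_div_sqrt {t : ℕ} (ht : 1 ≤ t) :
    (1 - lr H (t + 1)) * (2 / √t) + lr H (t + 1) * (√(t + 1 : ℕ))⁻¹ ≤ 2 / √(t + 1 : ℕ) := by
  rw [one_sub_lr_succ, lr]
  push_cast
  have hs : 0 < √(t : ℝ) := Real.sqrt_pos.mpr (by exact_mod_cast ht)
  have hu : 0 < √((t : ℝ) + 1) := Real.sqrt_pos.mpr (by positivity)
  have hs2 : √(t : ℝ) ^ 2 = t := Real.sq_sqrt (by positivity)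
  have hu2 : √((t : ℝ) + 1) ^ 2 = t + 1 := Real.sq_sqrt (by positivity)
  generalize √(t : ℝ) = s at *
  generalize √((t : ℝ) + 1) = u at *
  rw [← hs2] at hu2 ⊢
  have amgm : 2 * s * u ≤ 2 * s ^ 2 + 1 := by nlinarith [sq_nonneg (s - u)]
  have hlhs : s ^ 2 / (H + s ^ 2 + 1) * (2 / s) + (H + 1) / (H + (s ^ 2 + 1)) * u⁻¹
      = (2 * s * u + (H + 1)) / ((H + s ^ 2 + 1) * u) := by
    field_simp; ring
  rw [hlhs, div_le_div_iff₀ (by positivity) hu]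
  nlinarith

end

theorem stmt_1_general (H : ℕ) (t : ℕ) (ht : 1 ≤ t) :
    1 / Real.sqrt t ≤ ∑ i ∈ Finset.Icc 1 t, alphaC H i t / Real.sqrt i ∧
    ∑ i ∈ Finset.Icc 1 t, alphaC H i t / Real.sqrt i ≤ 2 / Real.sqrt t := by
  simp only [div_eq_mul_inv, one_mul]
  constructor
  · refine le_sum_alphaC_mul H ht fun i hi => ?_
    have hi := mem_Icc.mp hi
    have : (1 : ℝ) ≤ i := by exact_mod_cast hi.1
    gcongr
    exact hi.2
  · simpa only [div_eq_mul_inv] using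
      sum_alphaC_mul_le H (f := fun i => (√(i : ℝ))⁻¹) (g := fun t => 2 / √(t : ℝ))
        (by norm_num) (fun t ht => lr_step_two_div_sqrt H ht) ht

theorem stmt_1 (H : ℕ) (hH : 1 ≤ H) (t : ℕ) (ht : 1 ≤ t) :
    1 / Real.sqrt t ≤ ∑ i ∈ Finset.Icc 1 t, alphaC H i t / Real.sqrt i ∧
    ∑ i ∈ Finset.Icc 1 t, alphaC H i t / Real.sqrt i ≤ 2 / Real.sqrt t :=
  stmt_1_general H t ht
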